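/- Let ζ ∈ k be a primitive 8th root of unity and let b ∈ k with b ∉ {2, −2}. There exist u, λ ∈ k with u ≠ 0, λ ≠ 0 and ε ∈ {1, −1} such that λ²·f_b(X) = Σ_{j=0}^{9} cⱼ·(εζ)ʲ·(X+u)ʲ·(X−u)^{10−j} in k[X] (where cⱼ is the coefficient of Xʲ in f_0, i.e. λ²·f_b(x) = (x−u)¹⁰·f_0(εζ(x+u)/(x−u))), if and only if b = 6 or b = −6. -/
import Mathlib
open Polynomial

/-- The polynomial `f_a = X (X⁴ − 1)(X⁴ + a X² + 1)` over a field `k`. -/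
noncomputable def f {k : Type*} [Field k] (a : k) : k[X] :=
  X * (X ^ 4 - 1) * (X ^ 4 + C a * X ^ 2 + 1)

lemma f_eq {k : Type*} [Field k] (a : k) :
    f a = X ^ 9 + C a * X ^ 7 - C a * X ^ 3 - X := by
  unfold f; ring

lemma f_zero {k : Type*} [Field k] : f (0 : k) = X ^ 9 - X := by
  rw [f_eq]; simp

lemma sum_eq {k : Type*} [Field k] (w u : k) (hw : w ^ 8 = 1) :
    (∑ j ∈ Finset.range 10,
      C ((f (0 : k)).coeff j * w ^ j) * (X + C u) ^ j * (X - C u) ^ (10 - j)) =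
    C (16 * u * w) * (X ^ 9 + C (6 * u ^ 2) * X ^ 7 - C (6 * u ^ 6) * X ^ 3 - C (u ^ 8) * X) := by
  have h9 : w ^ 9 = w := by
    calc w ^ 9 = w ^ 8 * w := by ring
    _ = w := by rw [hw, one_mul]
  rw [f_zero]
  simp only [Finset.sum_range_succ, Finset.sum_range_zero, coeff_sub, coeff_X_pow, coeff_X]
  norm_num
  rw [← map_pow, h9]
  simp only [map_ofNat]
  ring

theorem stmt_10 (p : ℕ) (hp : p.Prime) (hp7 : 7 ≤ p)
    (k : Type*) [Field k] [IsAlgClosed k] [CharP k p]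
    (ζ : k) (hζ : IsPrimitiveRoot ζ 8)
    (b : k) (hb : b ∉ ({2, -2} : Set k)) :
    (∃ u lam ε : k, u ≠ 0 ∧ lam ≠ 0 ∧ ε ∈ ({1, -1} : Set k) ∧
      C (lam ^ 2) * f b =
        ∑ j ∈ Finset.range 10,
          C ((f (0 : k)).coeff j * (ε * ζ) ^ j) * (X + C u) ^ j * (X - C u) ^ (10 - j)) ↔
    (b = 6 ∨ b = -6) := by
  have h8 : ζ ^ 8 = 1 := hζ.pow_eq_one
  have hζ0 : ζ ≠ 0 := hζ.ne_zero (by norm_num)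
  have hne : ζ ^ 4 ≠ 1 := hζ.pow_ne_one_of_pos_of_lt (by norm_num) (by norm_num)
  have h4 : ζ ^ 4 = -1 := by
    have hprod : (ζ ^ 4 - 1) * (ζ ^ 4 + 1) = 0 := by linear_combination h8
    rcases mul_eq_zero.1 hprod with h | h
    · exact absurd (sub_eq_zero.1 h) hne
    · exact eq_neg_of_add_eq_zero_left h
  have hpd : ∀ n : ℕ, 0 < n → n < p → (n : k) ≠ 0 := by
    intro n hn hnp h
    exact absurd (Nat.le_of_dvd hn ((CharP.cast_eq_zero_iff k p n).1 h)) (by omega)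
  have h2 : (2 : k) ≠ 0 := by
    have := hpd 2 (by norm_num) (by omega); exact_mod_cast this
  have h6 : (6 : k) ≠ 0 := by
    have := hpd 6 (by norm_num) (by omega); exact_mod_cast this
  have h16 : (16 : k) ≠ 0 := by
    have : (16 : k) = 2 ^ 4 := by norm_num
    rw [this]; exact pow_ne_zero _ h2
  constructor
  · rintro ⟨u, lam, ε, hu, hlam, hε, heq⟩
    have hε' : ε = 1 ∨ ε = -1 := by simpa using hε
    have hε8 : ε ^ 8 = 1 := by rcases hε' with h | h <;> rw [h] <;> norm_num
    have hw : (ε * ζ) ^ 8 = 1 := by rw [mul_pow, hε8, h8, one_mul]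
    rw [sum_eq (ε * ζ) u hw, f_eq] at heq
    have c9 := congrArg (fun q => q.coeff 9) heq
    have c7 := congrArg (fun q => q.coeff 7) heq
    have c3 := congrArg (fun q => q.coeff 3) heq
    simp only [coeff_C_mul, coeff_add, coeff_sub, coeff_X_pow, coeff_X] at c9 c7 c3
    norm_num at c9 c7 c3
    have hs : lam ^ 2 ≠ 0 := pow_ne_zero _ hlam
    have hbu2 : b = 6 * u ^ 2 := by
      have := c7; rw [← c9] at this
      exact mul_left_cancel₀ hs (by linear_combination this)
    have hbu6 : b = 6 * u ^ 6 := by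
      have := c3; rw [← c9] at this
      exact mul_left_cancel₀ hs (by linear_combination this)
    have hu26 : u ^ 2 = u ^ 6 :=
      mul_left_cancel₀ h6 (hbu2.symm.trans hbu6)
    have hu4 : u ^ 4 = 1 := by
      have h' : u ^ 2 * (u ^ 4 - 1) = 0 := by linear_combination -hu26
      rcases mul_eq_zero.1 h' with h | h
      · exact absurd h (pow_ne_zero _ hu)
      · exact sub_eq_zero.1 h
    have hfac : (u ^ 2 - 1) * (u ^ 2 + 1) = 0 := by linear_combination hu4
    rcases mul_eq_zero.1 hfac with h | h
    · left; rw [hbu2, sub_eq_zero.1 h, mul_one]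
    · right; rw [hbu2, eq_neg_of_add_eq_zero_left h]; ring
  · intro hb6
    rcases hb6 with rfl | rfl
    · obtain ⟨lam, hl⟩ : ∃ lam : k, lam ^ 2 = 16 * ζ :=
        IsAlgClosed.exists_pow_nat_eq _ (by norm_num)
      have hlam : lam ≠ 0 := by
        intro h; rw [h] at hl
        exact (mul_ne_zero h16 hζ0) (by simpa using hl.symm)
      refine ⟨1, lam, 1, one_ne_zero, hlam, by simp, ?_⟩
      have hw : ((1 : k) * ζ) ^ 8 = 1 := by simp [h8]
      rw [sum_eq (1 * ζ) 1 hw, hl, f_eq]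
      simp only [map_mul, map_ofNat, one_pow, mul_one, map_one]
      ring
    · obtain ⟨lam, hl⟩ : ∃ lam : k, lam ^ 2 = 16 * ζ ^ 3 :=
        IsAlgClosed.exists_pow_nat_eq _ (by norm_num)
      have hlam : lam ≠ 0 := by
        intro h; rw [h] at hl
        exact (mul_ne_zero h16 (pow_ne_zero 3 hζ0)) (by simpa using hl.symm)
      refine ⟨ζ ^ 2, lam, 1, pow_ne_zero _ hζ0, hlam, by simp, ?_⟩
      have hw : ((1 : k) * ζ) ^ 8 = 1 := by simp [h8]
      rw [sum_eq (1 * ζ) (ζ ^ 2) hw, hl, f_eq]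
      have e1 : (ζ ^ 2) ^ 2 = -1 := by rw [← pow_mul]; exact h4
      have e2 : (ζ ^ 2) ^ 6 = -1 := by
        have h' : (ζ ^ 2) ^ 6 = ζ ^ 4 * ζ ^ 8 := by ring
        rw [h', h4, h8, mul_one]
      have e3 : (ζ ^ 2) ^ 8 = 1 := by
        have h' : (ζ ^ 2) ^ 8 = (ζ ^ 8) ^ 2 := by ring
        rw [h', h8, one_pow]
      rw [e1, e2, e3]
      simp only [map_mul, map_ofNat, map_one, map_neg, map_pow]
      ring
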